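/- arXiv:2501.17488 — 2 statements merged into one kernel-verified Lean document; each statement's English description precedes it below -/
import Mathlib

section
/- Under the LEN setup, assume F is monotone, F' is L-Lipschitz, M ≥ 4mL, and there exists z* ∈ E with F(z*) = 0. Then for every integer T ≥ 1: Σ_{t=0}^{T−1} η_t^{−2} ≤ 4M²‖z_0 − z*‖². -/
set_option maxHeartbeats 1000000

lemma len_taylor {E : Type*} [NormedAddCommGroup E] [InnerProductSpace ℝ E]
    (F : E → E) (F' : E → E →L[ℝ] E) (L : ℝ) (hL0 : 0 ≤ L)
    (hdiff : ∀ x : E, HasFDerivAt F (F' x) x)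
    (hLip : ∀ x y : E, ‖F' x - F' y‖ ≤ L * ‖x - y‖) (x y : E) :
    ‖F y - F x - (F' x) (y - x)‖ ≤ L * ‖y - x‖ * ‖y - x‖ := by
  refine Convex.norm_image_sub_le_of_norm_hasFDerivWithin_le'
    (f' := F') (φ := F' x) (C := L * ‖y - x‖) (s := segment ℝ x y)
    (fun u _ => (hdiff u).hasFDerivWithinAt) ?_ (convex_segment x y)
    (left_mem_segment ℝ x y) (right_mem_segment ℝ x y)
  intro u hu
  refine (hLip u x).trans ?_
  have : ‖u - x‖ ≤ ‖y - x‖ := by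
    rcases hu with ⟨a, b, ha, hb, hab, rfl⟩
    have : a • x + b • y - x = b • (y - x) := by
      have hx : a = 1 - b := by linarith
      rw [hx]; module
    rw [this, norm_smul, Real.norm_eq_abs, abs_of_nonneg hb]
    nlinarith [norm_nonneg (y - x)]
  nlinarith [norm_nonneg (u - x)]

open Finset

/-- Epoch-wise bound. -/
lemma len_epoch_bound (m : ℕ) (hm : 1 ≤ m) (α : ℝ) (hα0 : 0 ≤ α)
    (hα : 4 * (m : ℝ) * α ≤ 1) (r e : ℕ → ℝ)
    (hr : ∀ t, 0 ≤ r t) (he : ∀ t, 0 ≤ e t)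
    (a b : ℕ) (hab : b ≤ a + m)
    (key : ∀ t ∈ Finset.Ico a b,
      e t ≤ α * (r t + ∑ s ∈ Finset.Ico a t, (r s + e s))) :
    ∑ t ∈ Finset.Ico a b, (e t) ^ 2 ≤ (3 / 4) * ∑ t ∈ Finset.Ico a b, (r t) ^ 2 := by
  set S := ∑ t ∈ Finset.Ico a b, r t with hSdef
  set Es := ∑ t ∈ Finset.Ico a b, e t with hEdef
  set A := ∑ t ∈ Finset.Ico a b, (r t) ^ 2 with hAdef
  have hS : 0 ≤ S := Finset.sum_nonneg fun t _ => hr t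
  have hEs : 0 ≤ Es := Finset.sum_nonneg fun t _ => he t
  have hA : 0 ≤ A := Finset.sum_nonneg fun t _ => sq_nonneg _
  set μ : ℝ := (m : ℝ) with hμdef
  have hμ : (1 : ℝ) ≤ μ := by rw [hμdef]; exact_mod_cast hm
  have hcard : ((Finset.Ico a b).card : ℝ) ≤ μ := by
    rw [Nat.card_Ico, hμdef]
    exact_mod_cast (by omega : b - a ≤ m)
  have hcard0 : (0 : ℝ) ≤ ((Finset.Ico a b).card : ℝ) := by positivity
  -- step 1: partial sums bounded by S + Es
  have key2 : ∀ t ∈ Finset.Ico a b, e t ≤ α * r t + α * (S + Es) := by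
    intro t ht
    have h1 : ∑ s ∈ Finset.Ico a t, (r s + e s) ≤ S + Es := by
      have hsub : Finset.Ico a t ⊆ Finset.Ico a b :=
        Finset.Ico_subset_Ico le_rfl (Finset.mem_Ico.1 ht).2.le
      calc ∑ s ∈ Finset.Ico a t, (r s + e s)
          ≤ ∑ s ∈ Finset.Ico a b, (r s + e s) :=
            Finset.sum_le_sum_of_subset_of_nonneg hsub
              (fun s _ _ => add_nonneg (hr s) (he s))
        _ = S + Es := Finset.sum_add_distrib
    have := key t ht
    nlinarith [this, mul_le_mul_of_nonneg_left h1 hα0]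
  -- step 2: sum bound on Es
  have hEsum : Es ≤ α * S + ((Finset.Ico a b).card : ℝ) * (α * (S + Es)) := by
    calc Es ≤ ∑ t ∈ Finset.Ico a b, (α * r t + α * (S + Es)) :=
          Finset.sum_le_sum key2
      _ = α * S + ((Finset.Ico a b).card : ℝ) * (α * (S + Es)) := by
          rw [Finset.sum_add_distrib, ← Finset.mul_sum, Finset.sum_const, nsmul_eq_mul]
  have hEsum' : Es ≤ α * S + μ * (α * (S + Es)) := by
    refine hEsum.trans ?_
    have : ((Finset.Ico a b).card : ℝ) * (α * (S + Es)) ≤ μ * (α * (S + Es)) :=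
      mul_le_mul_of_nonneg_right hcard (by positivity)
    linarith
  have hEsS : 3 * Es ≤ 2 * S := by
    nlinarith [mul_nonneg (sub_nonneg.2 hα) hS, mul_nonneg (sub_nonneg.2 hα) hEs,
      mul_nonneg (mul_nonneg (sub_nonneg.2 (by linarith : (1:ℝ) ≤ μ)) hα0) hS]
  -- step 3: per-term clean bound
  have key4 : ∀ t ∈ Finset.Ico a b, 12 * μ * e t ≤ 3 * μ * r t + 5 * S := by
    intro t ht
    have h2 := key2 t ht
    nlinarith [mul_nonneg (sub_nonneg.2 hα) (hr t),
      mul_nonneg (sub_nonneg.2 hα) hS, mul_nonneg (sub_nonneg.2 hα) hEs,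
      mul_nonneg (mul_nonneg (sub_nonneg.2 hμ) hα0) (hr t), hr t, he t]
  -- squares
  have keysq : ∀ t ∈ Finset.Ico a b,
      144 * μ ^ 2 * e t ^ 2 ≤ 9 * μ ^ 2 * r t ^ 2 + 30 * μ * S * r t + 25 * S ^ 2 := by
    intro t ht
    have h4 := key4 t ht
    have h0 : 0 ≤ 12 * μ * e t := by nlinarith [he t, hμ]
    nlinarith [sq_nonneg (3 * μ * r t + 5 * S - 12 * μ * e t), h4, h0]
  have hsum : 144 * μ ^ 2 * ∑ t ∈ Finset.Ico a b, e t ^ 2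
      ≤ 9 * μ ^ 2 * A + 30 * μ * S * S + 25 * ((Finset.Ico a b).card : ℝ) * S ^ 2 := by
    have := Finset.sum_le_sum keysq
    calc 144 * μ ^ 2 * ∑ t ∈ Finset.Ico a b, e t ^ 2
        = ∑ t ∈ Finset.Ico a b, 144 * μ ^ 2 * e t ^ 2 := by rw [Finset.mul_sum]
      _ ≤ ∑ t ∈ Finset.Ico a b, (9 * μ ^ 2 * r t ^ 2 + 30 * μ * S * r t + 25 * S ^ 2) := this
      _ = 9 * μ ^ 2 * A + 30 * μ * S * S + 25 * ((Finset.Ico a b).card : ℝ) * S ^ 2 := by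
          rw [Finset.sum_add_distrib, Finset.sum_add_distrib, ← Finset.mul_sum,
            ← Finset.mul_sum, Finset.sum_const, nsmul_eq_mul]
          ring
  have hCS : S ^ 2 ≤ ((Finset.Ico a b).card : ℝ) * A := by
    exact_mod_cast sq_sum_le_card_mul_sum_sq (s := Finset.Ico a b) (f := r)
  have hB : 0 ≤ ∑ t ∈ Finset.Ico a b, e t ^ 2 := Finset.sum_nonneg fun t _ => sq_nonneg _
  -- finish
  have hfinal : 144 * μ ^ 2 * ∑ t ∈ Finset.Ico a b, e t ^ 2 ≤ 64 * μ ^ 2 * A := by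
    nlinarith [hsum, hCS, hcard, hcard0, hS, hA, hμ, sq_nonneg S,
      mul_nonneg hcard0 hA, mul_le_mul_of_nonneg_right hcard hA,
      mul_le_mul_of_nonneg_left hCS (by positivity : (0:ℝ) ≤ 25 * μ),
      mul_le_mul_of_nonneg_left hCS (by positivity : (0:ℝ) ≤ 30 * μ)]
  nlinarith [hfinal, hB, hA, hμ, sq_nonneg μ,
    mul_nonneg (mul_nonneg hB (sub_nonneg.2 hμ)) (by linarith : (0:ℝ) ≤ μ + 1),
    mul_nonneg (mul_nonneg hA (sub_nonneg.2 hμ)) (by linarith : (0:ℝ) ≤ μ + 1)]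


lemma len_global_bound (m : ℕ) (hm : 1 ≤ m) (α : ℝ) (hα0 : 0 ≤ α)
    (hα : 4 * (m : ℝ) * α ≤ 1) (r e : ℕ → ℝ)
    (hr : ∀ t, 0 ≤ r t) (he : ∀ t, 0 ≤ e t)
    (key : ∀ t, e t ≤ α * (r t + ∑ s ∈ Finset.Ico (m * (t / m)) t, (r s + e s))) :
    ∀ T, ∑ t ∈ Finset.range T, (e t) ^ 2 ≤ (3 / 4) * ∑ t ∈ Finset.range T, (r t) ^ 2 := by
  intro T
  induction T using Nat.strong_induction_on with
  | _ T ih =>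
    rcases Nat.eq_zero_or_pos T with rfl | hT
    · simp
    · set a := m * ((T - 1) / m) with hadef
      have hm0 : 0 < m := hm
      have haT : a ≤ T - 1 := Nat.mul_div_le _ _
      have haT' : a < T := lt_of_le_of_lt haT (Nat.sub_lt hT one_pos)
      have hTam : T ≤ a + m := by
        have h1 := Nat.div_add_mod (T - 1) m
        have h2 := Nat.mod_lt (T - 1) hm0
        omega
      have hsplit : Finset.range T = Finset.range a ∪ Finset.Ico a T := by
        rw [Finset.range_eq_Ico, Finset.range_eq_Ico, Finset.Ico_union_Ico_eq_Ico (Nat.zero_le a) haT'.le]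
      have hdisj : Disjoint (Finset.range a) (Finset.Ico a T) := by
        rw [Finset.range_eq_Ico]
        exact Finset.Ico_disjoint_Ico_consecutive 0 a T
      have hkey' : ∀ t ∈ Finset.Ico a T,
          e t ≤ α * (r t + ∑ s ∈ Finset.Ico a t, (r s + e s)) := by
        intro t ht
        have htm : m * (t / m) = a := by
          rcases Finset.mem_Ico.1 ht with ⟨h1, h2⟩
          have e1 : t / m ≤ (T - 1) / m := Nat.div_le_div_right (by omega)
          have e2 : (T - 1) / m ≤ t / m := by
            have h3 := Nat.div_le_div_right (c := m) h1
            rwa [hadef, Nat.mul_div_cancel_left _ hm0] at h3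
          rw [hadef, le_antisymm e1 e2]
        have hk := key t
        rwa [htm] at hk
      have hepoch := len_epoch_bound m hm α hα0 hα r e hr he a T hTam hkey'
      have hih := ih a haT'
      rw [hsplit, Finset.sum_union hdisj, Finset.sum_union hdisj]
      linarith


open scoped RealInnerProductSpace

/-- Under the LEN setup with monotone `F`, `L`-Lipschitz `F'`, `M ≥ 4 m L`, and a root
`z*` of `F`, the sum of the inverse squared stepsizes is bounded. -/
theorem len_inverse_stepsize_bound
    {E : Type*} [NormedAddCommGroup E] [InnerProductSpace ℝ E] [FiniteDimensional ℝ E]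
    (F : E → E) (F' : E → E →L[ℝ] E) (L M : ℝ) (m : ℕ) (hm : 1 ≤ m)
    (hdiff : ∀ x : E, HasFDerivAt F (F' x) x)
    (hLip : ∀ x y : E, ‖F' x - F' y‖ ≤ L * ‖x - y‖)
    (hmono : ∀ x y : E, 0 ≤ ⟪F x - F y, x - y⟫)
    (hMpos : 0 < M) (hM : 4 * (m : ℝ) * L ≤ M)
    (z w : ℕ → E) (η : ℕ → ℝ)
    (hne : ∀ t, w t ≠ z t)
    (hnewton : ∀ t, F (z t) + F' (z (m * (t / m))) (w t - z t)
        + (M * ‖w t - z t‖) • (w t - z t) = 0)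
    (hη : ∀ t, η t = 1 / (M * ‖z t - w t‖))
    (hupdate : ∀ t, z (t + 1) = z t - η t • F (w t))
    (zstar : E) (hstar : F zstar = 0)
    (T : ℕ) (hT : 1 ≤ T) :
    ∑ t ∈ Finset.range T, (η t)⁻¹ ^ 2 ≤ 4 * M ^ 2 * ‖z 0 - zstar‖ ^ 2 := by
  classical
  set r : ℕ → ℝ := fun t => ‖z t - w t‖ with hrdef
  set e : ℕ → ℝ := fun t => ‖z (t + 1) - w t‖ with hedef
  have hr0 : ∀ t, 0 ≤ r t := fun t => norm_nonneg _
  have he0 : ∀ t, 0 ≤ e t := fun t => norm_nonneg _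
  have hrpos : ∀ t, 0 < r t := by
    intro t
    simpa [hrdef, norm_pos_iff, sub_ne_zero] using (hne t).symm
  have hL0 : 0 ≤ L := by
    have h1 := (norm_nonneg (F' (w 0) - F' (z 0))).trans (hLip (w 0) (z 0))
    have h2 : 0 < ‖w 0 - z 0‖ := by
      simpa [norm_pos_iff, sub_ne_zero] using hne 0
    nlinarith
  have hMr : ∀ t, 0 < M * r t := fun t => mul_pos hMpos (hrpos t)
  have hηpos : ∀ t, 0 < η t := by
    intro t
    rw [hη t]
    exact one_div_pos.mpr (hMr t)
  have hηinv : ∀ t, (η t)⁻¹ = M * r t := by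
    intro t
    rw [hη t, one_div, inv_inv]
  -- step norm bound: ‖z (s+1) - z s‖ ≤ r s + e s
  have hstep : ∀ s, ‖z (s + 1) - z s‖ ≤ r s + e s := by
    intro s
    have : z (s + 1) - z s = (z (s + 1) - w s) - (z s - w s) := by abel
    rw [this]
    refine (norm_sub_le _ _).trans ?_
    simp only [hrdef, hedef]
    linarith
  -- telescoping distance bound
  have tel : ∀ a t, a ≤ t → ‖z t - z a‖ ≤ ∑ s ∈ Finset.Ico a t, (r s + e s) := by
    intro a t hat
    induction t, hat using Nat.le_induction with
    | base => simp
    | succ t hat ih =>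
      have h1 : z (t + 1) - z a = (z (t + 1) - z t) + (z t - z a) := by abel
      rw [Finset.sum_Ico_succ_top hat, h1]
      refine (norm_add_le _ _).trans ?_
      have := hstep t
      linarith
  -- key lazy-Newton error bound
  have key : ∀ t, e t ≤ (L / M) * (r t + ∑ s ∈ Finset.Ico (m * (t / m)) t, (r s + e s)) := by
    intro t
    set a := m * (t / m) with hadef
    set A := F' (z a) with hAdef
    have hwz : ‖w t - z t‖ = r t := norm_sub_rev _ _
    have hnewt : (M * r t) • (w t - z t) = -(F (z t) + A (w t - z t)) := by
      have := hnewton t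
      rw [hwz] at this
      rw [eq_neg_iff_add_eq_zero]
      linear_combination (norm := module) this
    have hzw : z t - w t = (η t) • ((M * r t) • (z t - w t)) := by
      rw [smul_smul, hη t, hrdef]
      rw [one_div, inv_mul_cancel₀ (ne_of_gt (hMr t)), one_smul]
    have hid : z (t + 1) - w t = (η t) • ((F (z t) + A (w t - z t)) - F (w t)) := by
      rw [hupdate t]
      have h2 : (M * r t) • (z t - w t) = F (z t) + A (w t - z t) := by
        have : (M * r t) • (z t - w t) = -((M * r t) • (w t - z t)) := by module
        rw [this, hnewt, neg_neg]
      calc z t - η t • F (w t) - w t = (z t - w t) - η t • F (w t) := by abel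
        _ = (η t) • ((M * r t) • (z t - w t)) - η t • F (w t) := by rw [← hzw]
        _ = (η t) • ((F (z t) + A (w t - z t)) - F (w t)) := by rw [h2, smul_sub]
    -- bound the norm of the error
    have hX : ‖(F (z t) + A (w t - z t)) - F (w t)‖
        ≤ L * r t * r t + L * ‖z t - z a‖ * r t := by
      have hsplit : (F (z t) + A (w t - z t)) - F (w t)
          = -((F (w t) - F (z t) - (F' (z t)) (w t - z t))
              + ((F' (z t) - A) (w t - z t))) := by
        simp [ContinuousLinearMap.sub_apply]
        abel
      rw [hsplit, norm_neg]
      refine (norm_add_le _ _).trans ?_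
      have h1 : ‖F (w t) - F (z t) - (F' (z t)) (w t - z t)‖ ≤ L * r t * r t := by
        have := len_taylor F F' L hL0 hdiff hLip (z t) (w t)
        rwa [hwz] at this
      have h2 : ‖(F' (z t) - A) (w t - z t)‖ ≤ L * ‖z t - z a‖ * r t := by
        refine ((F' (z t) - A).le_opNorm _).trans ?_
        rw [hwz]
        exact mul_le_mul_of_nonneg_right (hLip (z t) (z a)) (hr0 t)
      linarith
    have het : e t = (η t) * ‖(F (z t) + A (w t - z t)) - F (w t)‖ := by
      rw [hedef]
      simp only
      rw [hid, norm_smul, Real.norm_eq_abs, abs_of_pos (hηpos t)]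
    have hd : ‖z t - z a‖ ≤ ∑ s ∈ Finset.Ico a t, (r s + e s) :=
      tel a t (Nat.mul_div_le t m)
    have hcalc : (η t) * (L * r t * r t + L * ‖z t - z a‖ * r t)
        = (L / M) * (r t + ‖z t - z a‖) := by
      have hrne : r t ≠ 0 := ne_of_gt (hrpos t)
      have hMne : M ≠ 0 := ne_of_gt hMpos
      have hηt : η t = 1 / (M * r t) := hη t
      rw [hηt]
      field_simp
    have h3 : e t ≤ (L / M) * (r t + ‖z t - z a‖) := by
      rw [← hcalc, het]
      exact mul_le_mul_of_nonneg_left hX (hηpos t).le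
    refine h3.trans ?_
    have hLM : 0 ≤ L / M := div_nonneg hL0 hMpos.le
    exact mul_le_mul_of_nonneg_left (by linarith) hLM
  -- descent inequality
  have descent : ∀ t, r t ^ 2 - e t ^ 2
      ≤ ‖z t - zstar‖ ^ 2 - ‖z (t + 1) - zstar‖ ^ 2 := by
    intro t
    set g := F (w t) with hgdef
    have h1 : z (t + 1) - zstar = (z t - zstar) - (η t) • g := by
      rw [hupdate t]; abel
    have h2 : z (t + 1) - w t = (z t - w t) - (η t) • g := by
      rw [hupdate t]; abel
    have e1 : ‖z (t + 1) - zstar‖ ^ 2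
        = ‖z t - zstar‖ ^ 2 - 2 * (η t * ⟪z t - zstar, g⟫) + (η t) ^ 2 * ‖g‖ ^ 2 := by
      rw [h1, norm_sub_sq_real, real_inner_smul_right, norm_smul, Real.norm_eq_abs,
        mul_pow, sq_abs]
    have e2 : e t ^ 2
        = r t ^ 2 - 2 * (η t * ⟪z t - w t, g⟫) + (η t) ^ 2 * ‖g‖ ^ 2 := by
      show ‖z (t + 1) - w t‖ ^ 2 = ‖z t - w t‖ ^ 2 - _ + _
      rw [h2, norm_sub_sq_real, real_inner_smul_right, norm_smul, Real.norm_eq_abs,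
        mul_pow, sq_abs]
    have e3 : ⟪z t - zstar, g⟫ - ⟪z t - w t, g⟫ = ⟪w t - zstar, g⟫ := by
      rw [← inner_sub_left]
      congr 1
      abel
    have hmon : 0 ≤ ⟪w t - zstar, g⟫ := by
      have := hmono (w t) zstar
      rw [hstar, sub_zero] at this
      rwa [real_inner_comm]
    have h4 := mul_nonneg (hηpos t).le hmon
    have e3' : η t * ⟪z t - zstar, g⟫ - η t * ⟪z t - w t, g⟫
        = η t * ⟪w t - zstar, g⟫ := by rw [← mul_sub, e3]
    linarith [e1, e2, e3', h4]
  -- telescoping sum of descent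
  have hsumdesc : ∑ t ∈ Finset.range T, (r t ^ 2 - e t ^ 2) ≤ ‖z 0 - zstar‖ ^ 2 := by
    calc ∑ t ∈ Finset.range T, (r t ^ 2 - e t ^ 2)
        ≤ ∑ t ∈ Finset.range T, (‖z t - zstar‖ ^ 2 - ‖z (t + 1) - zstar‖ ^ 2) :=
          Finset.sum_le_sum fun t _ => descent t
      _ = ‖z 0 - zstar‖ ^ 2 - ‖z T - zstar‖ ^ 2 :=
          Finset.sum_range_sub' (fun t => ‖z t - zstar‖ ^ 2) T
      _ ≤ ‖z 0 - zstar‖ ^ 2 := by nlinarith [sq_nonneg ‖z T - zstar‖]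
  -- global arithmetic bound
  have hα : 4 * (m : ℝ) * (L / M) ≤ 1 := by
    rw [mul_div_assoc']
    exact (div_le_one hMpos).2 hM
  have hglob := len_global_bound m hm (L / M) (div_nonneg hL0 hMpos.le) hα r e hr0 he0 key T
  have hsum : ∑ t ∈ Finset.range T, r t ^ 2 ≤ 4 * ‖z 0 - zstar‖ ^ 2 := by
    rw [Finset.sum_sub_distrib] at hsumdesc
    linarith
  calc ∑ t ∈ Finset.range T, (η t)⁻¹ ^ 2
      = ∑ t ∈ Finset.range T, M ^ 2 * r t ^ 2 := by
        refine Finset.sum_congr rfl fun t _ => ?_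
        rw [hηinv t, mul_pow]
    _ = M ^ 2 * ∑ t ∈ Finset.range T, r t ^ 2 := by rw [Finset.mul_sum]
    _ ≤ M ^ 2 * (4 * ‖z 0 - zstar‖ ^ 2) := by
        exact mul_le_mul_of_nonneg_left hsum (sq_nonneg M)
    _ = 4 * M ^ 2 * ‖z 0 - zstar‖ ^ 2 := by ring
end

section
/- Let E be a finite-dimensional real inner product space, let F : E → E be differentiable with derivative F' that is L-Lipschitz in operator norm, and let M > 0. Suppose z̄, z ∈ E with z ≠ z̄ satisfy the cubic regularized Newton equation F(z̄) + F'(z̄)(z − z̄) + (M/2)‖z − z̄‖·(z − z̄) = 0, and set λ := (M/2)‖z − z̄‖. Then (z, λ) implements a (σ, γ)-MS oracle at z̄ with σ = L/M and γ = M/2: namely ‖z − (z̄ − (1/λ)F(z))‖ ≤ (L/M)‖z − z̄‖ and ‖z − z̄‖ ≥ λ/(M/2). -/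
lemma taylor_bound
    {E : Type*} [NormedAddCommGroup E] [InnerProductSpace ℝ E] [FiniteDimensional ℝ E]
    (F : E → E) (F' : E → E →L[ℝ] E) (L : ℝ) (hL : 0 ≤ L)
    (hdiff : ∀ x : E, HasFDerivAt F (F' x) x)
    (hLip : ∀ x y : E, ‖F' x - F' y‖ ≤ L * ‖x - y‖)
    (a b : E) :
    ‖F b - F a - F' a (b - a)‖ ≤ L / 2 * ‖b - a‖ ^ 2 := by
  set v := b - a with hv
  have hFcont : Continuous F' := by
    have : LipschitzWith L.toNNReal F' := by
      apply LipschitzWith.of_dist_le_mul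
      intro x y
      simpa [dist_eq_norm, Real.coe_toNNReal L hL] using hLip x y
    exact this.continuous
  have hcont : Continuous (fun t : ℝ => (F' (a + t • v)) v) := by
    have h1 : Continuous (fun t : ℝ => F' (a + t • v)) :=
      hFcont.comp (by continuity)
    exact (ContinuousLinearMap.apply ℝ E v).continuous.comp h1
  have hderiv : ∀ t ∈ Set.uIcc (0:ℝ) 1,
      HasDerivAt (fun t : ℝ => F (a + t • v)) ((F' (a + t • v)) v) t := by
    intro t _
    have hline : HasDerivAt (fun t : ℝ => a + t • v) v t := by
      simpa using ((hasDerivAt_id t).smul_const v).const_add a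
    exact (hdiff (a + t • v)).comp_hasDerivAt t hline
  have hint : IntervalIntegrable (fun t : ℝ => (F' (a + t • v)) v)
      MeasureTheory.volume 0 1 := hcont.intervalIntegrable 0 1
  have hftc : F (a + (1:ℝ) • v) - F (a + (0:ℝ) • v)
      = ∫ t in (0:ℝ)..1, (F' (a + t • v)) v :=
    (intervalIntegral.integral_eq_sub_of_hasDerivAt hderiv hint).symm
  have hsplit : F b - F a - F' a v = ∫ t in (0:ℝ)..1, ((F' (a + t • v)) v - (F' a) v) := by
    rw [intervalIntegral.integral_sub hint (intervalIntegrable_const)]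
    simp only [intervalIntegral.integral_const, sub_zero, one_smul]
    rw [← hftc]
    simp [hv]
  rw [hsplit]
  have hbound : ∀ t ∈ Set.Icc (0:ℝ) 1,
      ‖(F' (a + t • v)) v - (F' a) v‖ ≤ (L * ‖v‖ ^ 2) * t := by
    intro t ht
    have h1 : ‖(F' (a + t • v)) v - (F' a) v‖ ≤ ‖F' (a + t • v) - F' a‖ * ‖v‖ := by
      have := (F' (a + t • v) - F' a).le_opNorm v
      simpa using this
    have h2 : ‖F' (a + t • v) - F' a‖ ≤ L * (t * ‖v‖) := by
      have := hLip (a + t • v) a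
      simpa [norm_smul, abs_of_nonneg ht.1] using this
    calc ‖(F' (a + t • v)) v - (F' a) v‖ ≤ (L * (t * ‖v‖)) * ‖v‖ :=
          h1.trans (by
            apply mul_le_mul_of_nonneg_right h2 (norm_nonneg v))
      _ = (L * ‖v‖ ^ 2) * t := by ring
  have key : ‖∫ t in (0:ℝ)..1, ((F' (a + t • v)) v - (F' a) v)‖
      ≤ |∫ t in (0:ℝ)..1, (L * ‖v‖ ^ 2) * t| := by
    apply intervalIntegral.norm_integral_le_abs_of_norm_le
    · filter_upwards [MeasureTheory.ae_restrict_mem measurableSet_Ioc] with t ht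
      rw [Set.uIoc_of_le (by norm_num : (0:ℝ) ≤ 1)] at ht
      exact hbound t ⟨le_of_lt ht.1, ht.2⟩
    · apply Continuous.intervalIntegrable
      continuity
  have hval : (∫ t in (0:ℝ)..1, (L * ‖v‖ ^ 2) * t) = L / 2 * ‖v‖ ^ 2 := by
    rw [intervalIntegral.integral_const_mul, integral_id]
    ring
  rw [hval] at key
  calc ‖∫ t in (0:ℝ)..1, ((F' (a + t • v)) v - (F' a) v)‖ ≤ |L / 2 * ‖v‖ ^ 2| := key
    _ = L / 2 * ‖v‖ ^ 2 := abs_of_nonneg (by positivity)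

open scoped RealInnerProductSpace

/-- A cubic regularized Newton step implements a `(L/M, M/2)`-MS oracle. -/
theorem crn_implements_ms_oracle
    {E : Type*} [NormedAddCommGroup E] [InnerProductSpace ℝ E] [FiniteDimensional ℝ E]
    (F : E → E) (F' : E → E →L[ℝ] E) (L M : ℝ)
    (hdiff : ∀ x : E, HasFDerivAt F (F' x) x)
    (hLip : ∀ x y : E, ‖F' x - F' y‖ ≤ L * ‖x - y‖)
    (hMpos : 0 < M)
    (zbar z : E) (hne : z ≠ zbar)
    (hcrn : F zbar + F' zbar (z - zbar) + (M / 2 * ‖z - zbar‖) • (z - zbar) = 0)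
    (lam : ℝ) (hlam : lam = M / 2 * ‖z - zbar‖) :
    ‖z - (zbar - (1 / lam) • F z)‖ ≤ L / M * ‖z - zbar‖ ∧
      lam / (M / 2) ≤ ‖z - zbar‖ := by
  have hnpos : 0 < ‖z - zbar‖ := norm_pos_iff.mpr (sub_ne_zero.mpr hne)
  have hL : 0 ≤ L := by
    by_contra hneg
    push_neg at hneg
    have h1 := hLip z zbar
    nlinarith [norm_nonneg (F' z - F' zbar)]
  have hlam_pos : 0 < lam := by rw [hlam]; positivity
  have hlam_ne : lam ≠ 0 := ne_of_gt hlam_pos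
  rw [← hlam] at hcrn
  have h : F z - F zbar - F' zbar (z - zbar) = F z + lam • (z - zbar) := by
    have h2 : F zbar + F' zbar (z - zbar) = -(lam • (z - zbar)) := by
      have := hcrn
      rw [add_eq_zero_iff_eq_neg] at this
      exact this
    rw [sub_sub, h2, sub_neg_eq_add]
  have key : z - (zbar - (1 / lam) • F z)
      = (1 / lam) • (F z - F zbar - F' zbar (z - zbar)) := by
    rw [h, smul_add, smul_smul, one_div, inv_mul_cancel₀ hlam_ne, one_smul]
    abel
  constructor
  · rw [key, norm_smul]
    have htb := taylor_bound F F' L hL hdiff hLip zbar z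
    have h1 : ‖(1:ℝ) / lam‖ = 1 / lam := by
      rw [Real.norm_eq_abs, abs_of_pos (by positivity)]
    rw [h1]
    calc (1 / lam) * ‖F z - F zbar - F' zbar (z - zbar)‖
        ≤ (1 / lam) * (L / 2 * ‖z - zbar‖ ^ 2) := by
          apply mul_le_mul_of_nonneg_left htb (by positivity)
      _ = L / M * ‖z - zbar‖ := by
          rw [hlam]; field_simp
  · have : lam / (M / 2) = ‖z - zbar‖ := by rw [hlam]; field_simp
    exact this.le
end
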